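/- arXiv:math/0410045 — 3 statements merged into one kernel-verified Lean document; each statement's English description precedes it below -/
import Mathlib

section
/- Let a, b, Δ be real numbers with 0 ≤ a ≤ 6, 0 ≤ b ≤ 6 and Δ > 0, and let θ be a real number with 0 < θ < π. If a² + b² − 2·a·b·cos θ ≥ √2·Δ² and a·b·sin θ > 3.35·Δ, then Δ < √80. -/
set_option maxHeartbeats 1000000


theorem stmt_4 (a b Δ θ : ℝ)
    (ha0 : 0 ≤ a) (ha : a ≤ 6) (hb0 : 0 ≤ b) (hb : b ≤ 6) (hΔ : 0 < Δ)
    (hθ0 : 0 < θ) (hθπ : θ < Real.pi)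
    (hcos : a ^ 2 + b ^ 2 - 2 * a * b * Real.cos θ ≥ Real.sqrt 2 * Δ ^ 2)
    (hsin : a * b * Real.sin θ > 3.35 * Δ) :
    Δ < Real.sqrt 80 := by
  by_contra h
  push_neg at h
  have h80 : (0:ℝ) ≤ 80 := by norm_num
  have hΔ2 : (80:ℝ) ≤ Δ ^ 2 := by
    have := Real.sq_sqrt h80
    nlinarith [Real.sqrt_nonneg 80]
  set s := Real.sin θ with hs
  set c := Real.cos θ with hc
  have hspos : 0 < s := Real.sin_pos_of_pos_of_lt_pi hθ0 hθπ
  have hpyth : s ^ 2 + c ^ 2 = 1 := Real.sin_sq_add_cos_sq θ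
  have hab : a * b ≤ 36 := by nlinarith
  have hsq2 : Real.sqrt 2 ^ 2 = 2 := Real.sq_sqrt (by norm_num)
  have hsq2lb : (1.41:ℝ) ≤ Real.sqrt 2 := by
    nlinarith [Real.sqrt_nonneg 2]
  have hsq2ub : Real.sqrt 2 ≤ 1.415 := by
    nlinarith [Real.sqrt_nonneg 2]
  -- 2abc ≤ 72 - √2 Δ²
  have hA : 2 * (a * b * c) ≤ 72 - Real.sqrt 2 * Δ ^ 2 := by nlinarith
  have hApos : 0 < Real.sqrt 2 * Δ ^ 2 - 72 := by nlinarith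
  -- (abc)² ≤ 1296 - (3.35Δ)²
  have hC : (a * b * c) ^ 2 ≤ 1296 - (3.35 * Δ) ^ 2 := by
    have h1 : (a * b * c) ^ 2 = (a * b) ^ 2 - (a * b * s) ^ 2 := by
      have : (a * b * c) ^ 2 = (a * b) ^ 2 * (s ^ 2 + c ^ 2) - (a * b * s) ^ 2 := by
        ring
      rw [hpyth] at this; linarith
    have habnn : 0 ≤ a * b := mul_nonneg ha0 hb0
    have h2 : (a * b) ^ 2 ≤ 1296 := by nlinarith
    have h3 : (3.35 * Δ) ^ 2 ≤ (a * b * s) ^ 2 :=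
      pow_le_pow_left₀ (by positivity) hsin.le 2
    linarith
  -- square hA: (√2 Δ² - 72)² ≤ 4 (abc)²
  have hB : (Real.sqrt 2 * Δ ^ 2 - 72) ^ 2 ≤ (2 * (a * b * c)) ^ 2 := by
    have h1 : Real.sqrt 2 * Δ ^ 2 - 72 ≤ -(2 * (a * b * c)) := by linarith
    calc (Real.sqrt 2 * Δ ^ 2 - 72) ^ 2 ≤ (-(2 * (a * b * c))) ^ 2 :=
          pow_le_pow_left₀ hApos.le h1 2
      _ = (2 * (a * b * c)) ^ 2 := by ring
  have e1 : (Real.sqrt 2 * Δ ^ 2 - 72) ^ 2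
      = 2 * Δ ^ 4 - 144 * Real.sqrt 2 * Δ ^ 2 + 5184 := by
    have h2 : (Real.sqrt 2 * Δ ^ 2 - 72) ^ 2
        = Real.sqrt 2 ^ 2 * Δ ^ 4 - 144 * Real.sqrt 2 * Δ ^ 2 + 5184 := by ring
    rw [hsq2] at h2; linarith
  have hrb : 144 * Real.sqrt 2 * Δ ^ 2 ≤ 203.76 * Δ ^ 2 := by
    have h5 : 144 * Real.sqrt 2 ≤ 203.76 := by linarith
    exact mul_le_mul_of_nonneg_right h5 (sq_nonneg Δ)
  have e2 : (2 * (a * b * c)) ^ 2 = 4 * (a * b * c) ^ 2 := by ring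
  have e3 : (3.35 * Δ) ^ 2 = 11.2225 * Δ ^ 2 := by ring
  have hq : 160 * Δ ^ 2 ≤ 2 * Δ ^ 4 := by
    have h6 := mul_nonneg (sq_nonneg Δ) (sub_nonneg.2 hΔ2)
    have h7 : Δ ^ 2 * (Δ ^ 2 - 80) = Δ ^ 4 - 80 * Δ ^ 2 := by ring
    linarith
  -- combine
  linarith
end

section
/- Let O, A, B be points in the Euclidean plane ℝ² and let Δ be a positive real number. Suppose dist(O, A) ≤ 6, dist(O, B) ≤ 6, dist(A, B) ≥ 2^{1/4}·Δ, and the area of the triangle OAB (one half of |det(A − O, B − O)|) is greater than 3.35·Δ/2. Then Δ < √80 < 8.95. -/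
lemma stmt_5_aux (a0 a1 b0 b1 Δ : ℝ) (hΔ : 0 < Δ)
    (h1 : a0 ^ 2 + a1 ^ 2 ≤ 36) (h2 : b0 ^ 2 + b1 ^ 2 ≤ 36)
    (h3 : (a0 - b0) ^ 2 + (a1 - b1) ^ 2 ≥ 1.413721 * Δ ^ 2)
    (hD : |a0 * b1 - a1 * b0| > 3.35 * Δ) : Δ ^ 2 < 80 := by
  have hD2 : (a0 * b1 - a1 * b0) ^ 2 > 11.2225 * Δ ^ 2 := by
    have h35 : (0:ℝ) ≤ 3.35 * Δ := by positivity
    nlinarith [sq_abs (a0 * b1 - a1 * b0), hD, h35]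
  by_contra hc
  push_neg at hc
  have hL80 : (a0 - b0) ^ 2 + (a1 - b1) ^ 2 ≥ 113.09768 := by nlinarith
  have hP : a0 * b0 + a1 * b1 ≤ -20.54884 := by nlinarith
  have hP2 : (a0 * b0 + a1 * b1) ^ 2 ≥ 422.25 := by nlinarith
  have hab : (a0 ^ 2 + a1 ^ 2) * (b0 ^ 2 + b1 ^ 2) ≤ 1296 := by
    nlinarith [sq_nonneg a0, sq_nonneg a1, sq_nonneg b0, sq_nonneg b1]
  have key : (a0 * b1 - a1 * b0) ^ 2 + (a0 * b0 + a1 * b1) ^ 2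
      = (a0 ^ 2 + a1 ^ 2) * (b0 ^ 2 + b1 ^ 2) := by ring
  have hD80 : (a0 * b1 - a1 * b0) ^ 2 > 897.8 := by nlinarith
  linarith [key, hab, hP2, hD80]

theorem stmt_5 (O A B : EuclideanSpace ℝ (Fin 2)) (Δ : ℝ) (hΔ : 0 < Δ)
    (hOA : dist O A ≤ 6) (hOB : dist O B ≤ 6)
    (hAB : dist A B ≥ (2 : ℝ) ^ ((1 : ℝ) / 4) * Δ)
    (harea : |(A - O) 0 * (B - O) 1 - (A - O) 1 * (B - O) 0| / 2 > 3.35 * Δ / 2) :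
    Δ < Real.sqrt 80 ∧ Real.sqrt 80 < 8.95 := by
  constructor
  · rw [show Δ < Real.sqrt 80 ↔ Δ ^ 2 < 80 from Real.lt_sqrt hΔ.le]
    have hsq : ∀ (x y : EuclideanSpace ℝ (Fin 2)),
        dist x y ^ 2 = (x 0 - y 0) ^ 2 + (x 1 - y 1) ^ 2 := by
      intro x y
      rw [EuclideanSpace.dist_eq, Real.sq_sqrt (by positivity)]
      simp [Fin.sum_univ_two, Real.dist_eq, sq_abs]
    have h1 : (A 0 - O 0) ^ 2 + (A 1 - O 1) ^ 2 ≤ 36 := by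
      have := hsq O A
      nlinarith [dist_nonneg (x := O) (y := A)]
    have h2 : (B 0 - O 0) ^ 2 + (B 1 - O 1) ^ 2 ≤ 36 := by
      have := hsq O B
      nlinarith [dist_nonneg (x := O) (y := B)]
    have hrpos : (0:ℝ) < (2:ℝ) ^ ((1:ℝ)/4) := Real.rpow_pos_of_pos (by norm_num) _
    have hr4 : ((2:ℝ) ^ ((1:ℝ)/4)) ^ (4:ℕ) = 2 := by
      rw [← Real.rpow_natCast ((2:ℝ) ^ ((1:ℝ)/4)) 4, ← Real.rpow_mul (by norm_num)]
      norm_num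
    have hrge : (1.189 : ℝ) ≤ (2:ℝ) ^ ((1:ℝ)/4) := by
      by_contra h
      push_neg at h
      have h2' : ((2:ℝ) ^ ((1:ℝ)/4)) ^ 2 < 1.413721 := by nlinarith
      have h4' : ((2:ℝ) ^ ((1:ℝ)/4)) ^ (4:ℕ) < 2 := by nlinarith
      linarith [hr4, h4']
    have hABd : dist A B ≥ 1.189 * Δ := le_trans (by nlinarith) hAB
    have h3 : ((A 0 - O 0) - (B 0 - O 0)) ^ 2 + ((A 1 - O 1) - (B 1 - O 1)) ^ 2
        ≥ 1.413721 * Δ ^ 2 := by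
      have hd := hsq A B
      have e0 : A 0 - O 0 - (B 0 - O 0) = A 0 - B 0 := by ring
      have e1 : A 1 - O 1 - (B 1 - O 1) = A 1 - B 1 := by ring
      rw [e0, e1]
      nlinarith [hABd, hΔ.le, dist_nonneg (x := A) (y := B)]
    have hD : |(A 0 - O 0) * (B 1 - O 1) - (A 1 - O 1) * (B 0 - O 0)| > 3.35 * Δ := by
      have e0 : (A - O) 0 = A 0 - O 0 := rfl
      have e1 : (B - O) 1 = B 1 - O 1 := rfl
      have e2 : (A - O) 1 = A 1 - O 1 := rfl
      have e3 : (B - O) 0 = B 0 - O 0 := rfl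
      rw [e0, e1, e2, e3] at harea
      linarith
    exact stmt_5_aux _ _ _ _ _ hΔ h1 h2 h3 hD
  · rw [show (8.95:ℝ) = Real.sqrt (8.95 ^ 2) from (Real.sqrt_sq (by norm_num)).symm]
    exact Real.sqrt_lt_sqrt (by norm_num) (by norm_num)
end

section
/- Let O, A, B be points in the Euclidean plane ℝ² and let Δ be a positive integer. Suppose dist(O, A) ≤ 6, dist(O, B) ≤ 6, dist(A, B) ≥ 2^{1/4}·Δ, and the area of the triangle OAB (one half of |det(A − O, B − O)|) is greater than 3.35·Δ/2. Then Δ ≤ 8. -/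
lemma stmt_6_aux (u0 u1 v0 v1 d : ℝ) (hd : 9 ≤ d)
    (ha : u0 ^ 2 + u1 ^ 2 ≤ 36) (hb : v0 ^ 2 + v1 ^ 2 ≤ 36)
    (hc : Real.sqrt 2 * d ^ 2 ≤ (u0 - v0) ^ 2 + (u1 - v1) ^ 2)
    (hD : 3.35 * d ≤ |u0 * v1 - u1 * v0|) : False := by
  have hsqrt2 : (1.414 : ℝ) ≤ Real.sqrt 2 := by
    nlinarith [Real.sq_sqrt (by norm_num : (0:ℝ) ≤ 2), Real.sqrt_nonneg 2]
  have hD2 : (u0 * v1 - u1 * v0) ^ 2 ≥ (3.35 * d) ^ 2 := by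
    have h1 : (0:ℝ) ≤ 3.35 * d := by nlinarith
    nlinarith [sq_abs (u0 * v1 - u1 * v0), abs_nonneg (u0 * v1 - u1 * v0)]
  have hd2 : (81 : ℝ) ≤ d ^ 2 := by nlinarith
  have hlag : (u0 ^ 2 + u1 ^ 2) * (v0 ^ 2 + v1 ^ 2) =
      (u0 * v1 - u1 * v0) ^ 2 + (u0 * v0 + u1 * v1) ^ 2 := by ring
  have h2x : 2 * (u0 * v0 + u1 * v1) ≤ 72 - 1.414 * d ^ 2 := by
    nlinarith [hc, ha, hb, hsqrt2, hd2]
  have hxneg : u0 * v0 + u1 * v1 ≤ -21.267 := by nlinarith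
  have hab : (u0 ^ 2 + u1 ^ 2) * (v0 ^ 2 + v1 ^ 2) ≤ 1296 := by
    nlinarith [sq_nonneg u0, sq_nonneg u1, sq_nonneg v0, sq_nonneg v1]
  nlinarith [hxneg, hD2, hd2, hlag, hab, sq_nonneg (u0 * v0 + u1 * v1 + 21.267)]

theorem stmt_6 (O A B : EuclideanSpace ℝ (Fin 2)) (Δ : ℤ) (hΔ : 0 < Δ)
    (hOA : dist O A ≤ 6) (hOB : dist O B ≤ 6)
    (hAB : dist A B ≥ (2 : ℝ) ^ ((1 : ℝ) / 4) * (Δ : ℝ))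
    (harea : |(A - O) 0 * (B - O) 1 - (A - O) 1 * (B - O) 0| / 2 >
      3.35 * (Δ : ℝ) / 2) :
    Δ ≤ 8 := by
  by_contra h
  push_neg at h
  have h9 : (9 : ℝ) ≤ (Δ : ℝ) := by exact_mod_cast h
  have ha : (A 0 - O 0) ^ 2 + (A 1 - O 1) ^ 2 ≤ 36 := by
    simp only [EuclideanSpace.dist_eq, Fin.sum_univ_two, Real.dist_eq, sq_abs] at hOA
    have hnn : (0:ℝ) ≤ (O 0 - A 0) ^ 2 + (O 1 - A 1) ^ 2 := by positivity
    have hsq := Real.sq_sqrt hnn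
    nlinarith [Real.sqrt_nonneg ((O 0 - A 0) ^ 2 + (O 1 - A 1) ^ 2), hsq, hOA]
  have hb : (B 0 - O 0) ^ 2 + (B 1 - O 1) ^ 2 ≤ 36 := by
    simp only [EuclideanSpace.dist_eq, Fin.sum_univ_two, Real.dist_eq, sq_abs] at hOB
    have hnn : (0:ℝ) ≤ (O 0 - B 0) ^ 2 + (O 1 - B 1) ^ 2 := by positivity
    have hsq := Real.sq_sqrt hnn
    nlinarith [Real.sqrt_nonneg ((O 0 - B 0) ^ 2 + (O 1 - B 1) ^ 2), hsq, hOB]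
  have hs2 : ((2 : ℝ) ^ ((1 : ℝ) / 4)) ^ 2 = Real.sqrt 2 := by
    rw [← Real.rpow_natCast ((2:ℝ) ^ ((1:ℝ)/4)) 2, ← Real.rpow_mul (by norm_num)]
    norm_num [Real.sqrt_eq_rpow]
  have hc : Real.sqrt 2 * (Δ : ℝ) ^ 2 ≤
      ((A 0 - O 0) - (B 0 - O 0)) ^ 2 + ((A 1 - O 1) - (B 1 - O 1)) ^ 2 := by
    simp only [EuclideanSpace.dist_eq, Fin.sum_univ_two, Real.dist_eq, sq_abs] at hAB
    have hnn : (0:ℝ) ≤ (A 0 - B 0) ^ 2 + (A 1 - B 1) ^ 2 := by positivity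
    have hsq := Real.sq_sqrt hnn
    have htΔ : (0:ℝ) ≤ (2 : ℝ) ^ ((1 : ℝ) / 4) * (Δ : ℝ) := by
      have h2 : (0:ℝ) < (2:ℝ) ^ ((1:ℝ)/4) := Real.rpow_pos_of_pos (by norm_num) _
      nlinarith
    have h1 := pow_le_pow_left₀ htΔ hAB 2
    rw [mul_pow, hs2, hsq] at h1
    have hexp : ((A 0 - O 0) - (B 0 - O 0)) ^ 2 + ((A 1 - O 1) - (B 1 - O 1)) ^ 2 =
        (A 0 - B 0) ^ 2 + (A 1 - B 1) ^ 2 := by ring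
    linarith
  simp only [PiLp.sub_apply] at harea
  exact stmt_6_aux (A 0 - O 0) (A 1 - O 1) (B 0 - O 0) (B 1 - O 1) (Δ : ℝ) h9
    ha hb hc (by linarith)
end
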